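/- The functions H_k = Σ_{j=1}^k z_jξ_j are eigenvectors of the r-matrix structure relative to the canonical symplectic structure, with eigenvalue λ_k = Σ_{j≤k} z_jξ_j − Σ_{j>k} z_jξ_j, modulo the Casimir direction dH: for every 1 ≤ k ≤ n and every polynomial f ∈ R one has {H_k, f}_π = λ_k·{H_k, f}_can − H_k·{H, f}_can, where H = Σ_{j=1}^n z_jξ_j. -/
import Mathlib


open MvPolynomial

noncomputable section

/-- The polynomial ring `R = ℂ[z_1,…,z_n,ξ_1,…,ξ_n]`. -/
abbrev R (n : ℕ) := MvPolynomial (Fin n ⊕ Fin n) ℂ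

/-- The variable `z_i`. -/
def z (n : ℕ) (i : Fin n) : R n := X (Sum.inl i)

/-- The variable `ξ_i`. -/
def ξ (n : ℕ) (i : Fin n) : R n := X (Sum.inr i)

/-- `H = Σ_i z_i ξ_i`. -/
def H (n : ℕ) : R n := ∑ i, z n i * ξ n i

/-- The bidegree weight: `z`-variables have weight `(1,0)`, `ξ`-variables weight `(0,1)`. -/
def bw (n : ℕ) : Fin n ⊕ Fin n → ℕ × ℕ := Sum.elim (fun _ => (1, 0)) (fun _ => (0, 1))

/-- `P^k`: the span of the bidegree-`(k,k)` monomials. -/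
def Phom (n k : ℕ) : Submodule ℂ (R n) := weightedHomogeneousSubmodule ℂ (bw n) (k, k)

/-- `P^{(k)} = ⊕_{j<k+1} P^j`; so `PfiltLT n (k+1)` is `P^{(k)}` and `PfiltLT n k` is `P^{(k-1)}`. -/
def PfiltLT (n k : ℕ) : Submodule ℂ (R n) := ⨆ j ∈ Finset.range k, Phom n j

/-- The homogenization map `𝒫_k`, sending `Σ_{j≤k} f_j` (with `f_j ∈ P^j`) to `Σ_{j≤k} f_j H^{k-j}`. -/
def homog (n k : ℕ) (f : R n) : R n :=
  ∑ j ∈ Finset.range (k + 1), weightedHomogeneousComponent (bw n) (j, j) f * H n ^ (k - j)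

/-- The canonical Poisson bracket
`{f,g}_can = Σ_i (∂f/∂z_i·∂g/∂ξ_i − ∂f/∂ξ_i·∂g/∂z_i)`. -/
def brCan (n : ℕ) (f g : R n) : R n :=
  ∑ i, (pderiv (Sum.inl i) f * pderiv (Sum.inr i) g -
        pderiv (Sum.inr i) f * pderiv (Sum.inl i) g)

/-- The `r`-matrix bracket `{f,g}_π`. -/
def brPi (n : ℕ) (f g : R n) : R n :=
  (∑ i, ∑ j, if i < j then z n i * z n j *
      (pderiv (Sum.inl i) f * pderiv (Sum.inl j) g -
       pderiv (Sum.inl j) f * pderiv (Sum.inl i) g) else 0)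
  - (∑ i, ∑ j, if i < j then ξ n i * ξ n j *
      (pderiv (Sum.inr i) f * pderiv (Sum.inr j) g -
       pderiv (Sum.inr j) f * pderiv (Sum.inr i) g) else 0)
  + (∑ i, ∑ j, if i < j then z n i * ξ n i *
      (pderiv (Sum.inl j) f * pderiv (Sum.inr j) g -
       pderiv (Sum.inr j) f * pderiv (Sum.inl j) g) else 0)
  - (∑ i, ∑ j, if j < i then z n i * ξ n i *
      (pderiv (Sum.inl j) f * pderiv (Sum.inr j) g -
       pderiv (Sum.inr j) f * pderiv (Sum.inl j) g) else 0)

/-- The Poisson pencil `{f,g}_{a,b} = a·{f,g}_π + b·H·{f,g}_can`. -/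
def brPencil (n : ℕ) (a b : ℂ) (f g : R n) : R n :=
  a • brPi n f g + b • (H n * brCan n f g)

/-- The partial sum `H_k = Σ_{j=1}^k z_jξ_j` (with 1-based mathematical indexing, so the
`j`-th mathematical variable is `z ⟨j-1⟩`). -/
def Hk (n k : ℕ) : R n := ∑ j : Fin n, if (j : ℕ) < k then z n j * ξ n j else 0

/-- The eigenvalue `λ_k = Σ_{j=1}^k z_jξ_j − Σ_{j=k+1}^n z_jξ_j`. -/
def lam (n k : ℕ) : R n :=
  (∑ j : Fin n, if (j : ℕ) < k then z n j * ξ n j else 0) -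
  (∑ j : Fin n, if k ≤ (j : ℕ) then z n j * ξ n j else 0)


lemma pd_z_Hk (n k : ℕ) (i : Fin n) :
    pderiv (Sum.inl i) (Hk n k) = if (i : ℕ) < k then ξ n i else 0 := by
  unfold Hk z ξ
  have key : ∀ j : Fin n, (if (j:ℕ) < k then (if j = i then (X (Sum.inr j) : R n) else 0) else 0)
      = if j = i then (if (j:ℕ) < k then X (Sum.inr j) else 0) else 0 := by
    intro j; by_cases h : j = i <;> simp [h]
  simp only [map_sum, apply_ite (pderiv (Sum.inl i)), map_zero, pderiv_mul, pderiv_X,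
    Pi.single_apply, Sum.inl.injEq, Sum.inr.injEq, reduceCtorEq, if_false, mul_zero, add_zero,
    ite_mul, one_mul, zero_mul, key, Finset.sum_ite_eq', Finset.mem_univ, if_true]

lemma pd_xi_Hk (n k : ℕ) (i : Fin n) :
    pderiv (Sum.inr i) (Hk n k) = if (i : ℕ) < k then z n i else 0 := by
  unfold Hk z ξ
  have key : ∀ j : Fin n, (if (j:ℕ) < k then (if j = i then (X (Sum.inl j) : R n) else 0) else 0)
      = if j = i then (if (j:ℕ) < k then X (Sum.inl j) else 0) else 0 := by
    intro j; by_cases h : j = i <;> simp [h]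
  simp only [map_sum, apply_ite (pderiv (Sum.inr i)), map_zero, pderiv_mul, pderiv_X,
    Pi.single_apply, Sum.inl.injEq, Sum.inr.injEq, reduceCtorEq, if_false, mul_zero, zero_add,
    add_zero, ite_mul, mul_ite, one_mul, mul_one, zero_mul, key, Finset.sum_ite_eq',
    Finset.mem_univ, if_true]

lemma pd_z_H (n : ℕ) (i : Fin n) : pderiv (Sum.inl i) (H n) = ξ n i := by
  unfold H z ξ; simp [pderiv_mul, pderiv_X, Pi.single_apply]

lemma pd_xi_H (n : ℕ) (i : Fin n) : pderiv (Sum.inr i) (H n) = z n i := by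
  unfold H z ξ; simp [pderiv_mul, pderiv_X, Pi.single_apply]

lemma sym_sum (n : ℕ) (t r : Fin n → Fin n → R n)
    (h : ∀ i j, t i j + t j i = r i j + r j i) :
    ∑ i, ∑ j, t i j = ∑ i, ∑ j, r i j := by
  have key : ∀ s : Fin n → Fin n → R n,
      (2:ℂ) • (∑ i, ∑ j, s i j) = ∑ i, ∑ j, (s i j + s j i) := by
    intro s
    rw [two_smul]
    nth_rewrite 2 [Finset.sum_comm]
    simp [← Finset.sum_add_distrib]
  have h2 : (2:ℂ) • (∑ i, ∑ j, t i j) = (2:ℂ) • (∑ i, ∑ j, r i j) := by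
    rw [key, key]; simp only [h]
  exact smul_right_injective (R n) (two_ne_zero (α := ℂ)) h2

set_option maxHeartbeats 2000000 in

/-- The functions `H_k = Σ_{j≤k} z_jξ_j` are eigenvectors of the `r`-matrix
structure relative to the canonical symplectic structure with eigenvalue
`λ_k = Σ_{j≤k} z_jξ_j − Σ_{j>k} z_jξ_j`, modulo the Casimir direction `dH`: for every
`1 ≤ k ≤ n` and every `f ∈ R`, `{H_k, f}_π = λ_k·{H_k, f}_can − H_k·{H, f}_can`. -/
theorem stmt_8 (n : ℕ) (hn : 1 ≤ n) (k : ℕ) (hk1 : 1 ≤ k) (hkn : k ≤ n) (f : R n) :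
    brPi n (Hk n k) f = lam n k * brCan n (Hk n k) f - Hk n k * brCan n (H n) f := by
  have hL : brPi n (Hk n k) f = ∑ i, ∑ j,
      ((if i < j then z n i * z n j *
        ((if (i:ℕ) < k then ξ n i else 0) * pderiv (Sum.inl j) f -
         (if (j:ℕ) < k then ξ n j else 0) * pderiv (Sum.inl i) f) else 0)
      - (if i < j then ξ n i * ξ n j *
        ((if (i:ℕ) < k then z n i else 0) * pderiv (Sum.inr j) f -
         (if (j:ℕ) < k then z n j else 0) * pderiv (Sum.inr i) f) else 0)
      + (if i < j then z n i * ξ n i *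
        ((if (j:ℕ) < k then ξ n j else 0) * pderiv (Sum.inr j) f -
         (if (j:ℕ) < k then z n j else 0) * pderiv (Sum.inl j) f) else 0)
      - (if j < i then z n i * ξ n i *
        ((if (j:ℕ) < k then ξ n j else 0) * pderiv (Sum.inr j) f -
         (if (j:ℕ) < k then z n j else 0) * pderiv (Sum.inl j) f) else 0)) := by
    unfold brPi
    simp only [pd_z_Hk, pd_xi_Hk, ← Finset.sum_sub_distrib, ← Finset.sum_add_distrib]
  have hR : lam n k * brCan n (Hk n k) f - Hk n k * brCan n (H n) f = ∑ i : Fin n, ∑ j : Fin n,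
      (((if (i:ℕ) < k then z n i * ξ n i else 0) - (if k ≤ (i:ℕ) then z n i * ξ n i else 0)) *
        ((if (j:ℕ) < k then ξ n j else 0) * pderiv (Sum.inr j) f -
         (if (j:ℕ) < k then z n j else 0) * pderiv (Sum.inl j) f)
      - (if (i:ℕ) < k then z n i * ξ n i else 0) *
        (ξ n j * pderiv (Sum.inr j) f - z n j * pderiv (Sum.inl j) f)) := by
    unfold brCan
    simp only [pd_z_Hk, pd_xi_Hk, pd_z_H, pd_xi_H]
    unfold lam Hk
    simp only [← Finset.sum_sub_distrib, Finset.sum_mul_sum, ← Finset.sum_sub_distrib]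
  rw [hL, hR]
  refine sym_sum n _ _ fun i j => ?_
  simp only [Fin.lt_def]
  split_ifs <;> first | ring1 | (exfalso; omega)
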